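/- Let ω ∈ G(r,s,n) and let γ be an ordered labeled graph corresponding to a factorization of ω into reflections. Then ζ_r^{κ(w_1) + ⋯ + κ(w_n)} = φ(ω), where φ(ω) is the product of the nonzero entries of ω. Consequently, since each non-self edge contributes +k and −k to two different walks while each self-edge labeled k' contributes sk' to one walk, the labels k'_1,...,k'_{m_2} of the self-edges must satisfy ζ_{r/s}^{k'_1} ⋯ ζ_{r/s}^{k'_{m_2}} = φ(ω). -/

import Mathlib

/-! Both sides are additive along the factorization. The sum of the entries of `(σ, a)` is a
homomorphism to `ZMod r`, and a reflection `σ_{ij}^{k/r}` has entries `k, -k` while `τ_i^{sk/r}`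
has the single entry `s·k`. On the walk side, the first edge `{a, b}` of the list sends every
walk starting at `i` on to `swap a b i`, so removing it permutes the walks; what it adds to
them is `+k` and `-k` on two different walks, or `s·k` on one walk for a self-edge. -/

def WreathZS (r n : ℕ) : Type := Equiv.Perm (Fin n) × (Fin n → ZMod r)
namespace WreathZS
variable {r n : ℕ}
instance : Mul (WreathZS r n) :=
  ⟨fun x y => (x.1 * y.1, (fun i => x.2 (y.1 i)) + y.2)⟩
instance : One (WreathZS r n) := ⟨((1 : Equiv.Perm (Fin n)), 0)⟩
instance : Inv (WreathZS r n) :=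
  ⟨fun x => (x.1⁻¹, fun i => -x.2 (x.1⁻¹ i))⟩
theorem mul_def (x y : WreathZS r n) :
    x * y = (x.1 * y.1, (fun i => x.2 (y.1 i)) + y.2) := rfl
theorem one_def : (1 : WreathZS r n) = ((1 : Equiv.Perm (Fin n)), 0) := rfl
instance : Group (WreathZS r n) where
  mul_assoc x y z := by
    simp only [mul_def]
    refine Prod.ext (mul_assoc _ _ _) ?_
    funext i
    exact add_assoc _ _ _
  one_mul x := by
    simp only [mul_def, one_def]
    refine Prod.ext (one_mul _) ?_
    funext i; exact zero_add _
  mul_one x := by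
    simp only [mul_def, one_def]
    refine Prod.ext (mul_one _) ?_
    funext i; exact add_zero _
  inv_mul_cancel x := by
    show (_, _) = (_, _)
    refine Prod.ext (inv_mul_cancel _) ?_
    funext i
    simp [Inv.inv]
end WreathZS

/-- The complex reflection group `G(r,s,n)`, modeled as the subgroup of the
wreath product `(ZMod r) ≀ Sₙ` of pairs `(σ, a)` such that `∑ i, a i` is
divisible by `s` in `ZMod r`. -/
def Grsn (r s n : ℕ) : Subgroup (WreathZS r n) where
  carrier := {x | ∃ c : ZMod r, ∑ i, x.2 i = (s : ZMod r) * c}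
  mul_mem' := by
    rintro x y ⟨c, hc⟩ ⟨d, hd⟩
    refine ⟨c + d, ?_⟩
    simp only [WreathZS.mul_def, Pi.add_apply]
    rw [Finset.sum_add_distrib, Equiv.sum_comp y.1 x.2, hc, hd, mul_add]
  one_mem' := ⟨0, by simp [WreathZS.one_def]⟩
  inv_mem' := by
    rintro x ⟨c, hc⟩
    refine ⟨-c, ?_⟩
    show ∑ i, -x.2 (x.1⁻¹ i) = _
    rw [show (∑ i, -x.2 (x.1⁻¹ i)) = ∑ i, (fun j => -x.2 j) (x.1⁻¹ i) from rfl,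
      Equiv.sum_comp x.1⁻¹ (fun j => -x.2 j), Finset.sum_neg_distrib, hc]
    ring

/-- `walkEndWt s L v` returns the endpoint and the signed weight `κ` of the
sequential ordered edge walk starting at `v` in the labeled graph `L`: each
traversed non-self edge labeled `k` contributes `+k` if traversed towards the
larger-indexed vertex (an up-step) and `-k` towards the smaller (a down-step),
while a self-edge labeled `k` contributes `s·k` (a loop). -/
def walkEndWt {n : ℕ} (s : ℕ) : List (Sym2 (Fin n) × ℤ) → Fin n → Fin n × ℤ
  | [], v => (v, 0)
  | (e, k) :: rest, v =>
    if h : v ∈ e then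
      let u := Sym2.Mem.other' h
      let w := walkEndWt s rest u
      (w.1, (if u = v then (s : ℤ) * k else if v < u then k else -k) + w.2)
    else walkEndWt s rest v

/-- The reflection of `G(r,s,n)` (in the `(σ, a)` wreath model) associated to a
labeled edge: an edge `{i,j}` with `i < j` labeled `k` gives the reflection
`σ_{ij}^{k/r}` (the pair `(swap i j, a)` with `a i = k`, `a j = -k`), and a
self-edge `{i,i}` labeled `k` gives `τ_i^{sk/r}` (the pair `(1, a)` with
`a i = s·k`). -/
def reflOf (r s n : ℕ) (ek : Sym2 (Fin n) × ℤ) : WreathZS r n :=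
  Sym2.lift
    ⟨fun i j =>
      if i = j then ((1 : Equiv.Perm (Fin n)),
        fun l => if l = i then ((s : ℤ) * ek.2 : ℤ) else 0)
      else (Equiv.swap i j,
        fun l => if l = min i j then ((ek.2 : ℤ) : ZMod r)
          else if l = max i j then (-ek.2 : ℤ) else 0),
      by
        intro a b
        by_cases h : a = b
        · subst h; simp; rfl
        · simp only [h, Ne.symm h, if_false]
          rw [Equiv.swap_comm, min_comm, max_comm]
          exact (if_neg not_false).trans (if_neg not_false).symm⟩
    ek.1

theorem Sym2.Mem.other'_eq_swap {α : Type*} [DecidableEq α] {a b i : α} (h : i ∈ s(a, b)) :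
    Sym2.Mem.other' h = Equiv.swap a b i := by
  have hspec := Sym2.other_spec' h
  rcases Sym2.mem_iff.mp h with rfl | rfl
  · rw [Sym2.congr_right.mp hspec, Equiv.swap_apply_left]
  · rw [Sym2.congr_right.mp (hspec.trans Sym2.eq_swap), Equiv.swap_apply_right]

theorem WreathZS.sum_snd_mul {r n : ℕ} (x y : WreathZS r n) :
    ∑ i, (x * y).2 i = ∑ i, x.2 i + ∑ i, y.2 i := by
  rw [WreathZS.mul_def, Pi.add_def, Finset.sum_add_distrib, Equiv.sum_comp y.1 x.2]

theorem sum_snd_reflOf (r s n : ℕ) (e : Sym2 (Fin n)) (k : ℤ) :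
    ∑ i, (reflOf r s n (e, k)).2 i = if e.IsDiag then ((s * k : ℤ) : ZMod r) else 0 := by
  induction e using Sym2.inductionOn with
  | _ a b =>
    by_cases hab : a = b
    · subst hab
      simp [reflOf]
    · simp [reflOf, hab, Finset.sum_ite, Finset.filter_ne', Finset.filter_eq']

theorem walkEndWt_cons_snd {n : ℕ} (s : ℕ) (a b : Fin n) (k : ℤ)
    (L : List (Sym2 (Fin n) × ℤ)) (i : Fin n) :
    (walkEndWt s ((s(a, b), k) :: L) i).2 =
      (if i ∈ s(a, b) then
        (if Equiv.swap a b i = i then (s : ℤ) * k else if i < Equiv.swap a b i then k else -k)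
        else 0) + (walkEndWt s L (Equiv.swap a b i)).2 := by
  by_cases h : i ∈ s(a, b)
  · simp [walkEndWt, h, Sym2.Mem.other'_eq_swap h]
  · have ⟨hia, hib⟩ : i ≠ a ∧ i ≠ b := by simpa [Sym2.mem_iff, not_or] using h
    simp [walkEndWt, h, Equiv.swap_apply_of_ne_of_ne hia hib]

theorem sum_walkEndWt_cons {n : ℕ} (s : ℕ) (e : Sym2 (Fin n)) (k : ℤ)
    (L : List (Sym2 (Fin n) × ℤ)) :
    ∑ i, (walkEndWt s ((e, k) :: L) i).2 =
      (if e.IsDiag then (s : ℤ) * k else 0) + ∑ i, (walkEndWt s L i).2 := by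
  induction e using Sym2.inductionOn with
  | _ a b =>
    simp_rw [walkEndWt_cons_snd, Finset.sum_add_distrib,
      Equiv.sum_comp (Equiv.swap a b) (fun i => (walkEndWt s L i).2), Sym2.mem_iff]
    congr 1
    by_cases hab : a = b
    · subst hab
      simp
    · rcases lt_or_gt_of_ne hab with h | h <;>
        simp [Finset.sum_ite, Finset.filter_or, Finset.filter_eq', Finset.sum_pair hab, hab,
          Ne.symm hab, h, h.not_gt]

theorem sum_walkEndWt {n : ℕ} (s : ℕ) (L : List (Sym2 (Fin n) × ℤ)) :
    ∑ i, (walkEndWt s L i).2 = s * ((L.filter fun ek => ek.1.IsDiag).map Prod.snd).sum := by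
  induction L with
  | nil => simp [walkEndWt]
  | cons ek L ih =>
    rw [sum_walkEndWt_cons, ih]
    by_cases he : ek.1.IsDiag <;> simp [he, mul_add]

theorem sum_snd_prod_reflOf (r s n : ℕ) (L : List (Sym2 (Fin n) × ℤ)) :
    ∑ i, (L.map (reflOf r s n)).reverse.prod.2 i =
      ((s * ((L.filter fun ek => ek.1.IsDiag).map Prod.snd).sum : ℤ) : ZMod r) := by
  induction L with
  | nil => simp [WreathZS.one_def]
  | cons ek L ih =>
    rw [List.map_cons, List.reverse_cons, List.prod_append, List.prod_singleton,
      WreathZS.sum_snd_mul, ih, sum_snd_reflOf]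
    by_cases he : ek.1.IsDiag <;> simp [he, mul_add, add_comm]

theorem factorization_graph_weight_sum_general (r s n : ℕ) (L : List (Sym2 (Fin n) × ℤ)) :
    (((∑ i, (walkEndWt s L i).2 : ℤ) : ZMod r)
        = ∑ i, (L.map (reflOf r s n)).reverse.prod.2 i) ∧
    ((((s : ℤ) * ((L.filter fun ek => ek.1.IsDiag).map Prod.snd).sum : ℤ) : ZMod r)
        = ∑ i, (L.map (reflOf r s n)).reverse.prod.2 i) := by
  rw [sum_snd_prod_reflOf, sum_walkEndWt]
  exact ⟨rfl, rfl⟩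

/-- (Equation (3.4)/(3.5) of the paper.) If the ordered labeled graph `L`
encodes a factorization of `ω ∈ G(r,s,n)` into reflections, then
`ζ_r^{κ(w_1) + ⋯ + κ(w_n)} = φ(ω)`, the product of the nonzero entries of `ω`
(in the `(σ, a)` model, `∑ i, κ(w_i) ≡ ∑ i, a i (mod r)`); consequently the
self-edge labels `k'_1, …, k'_{m₂}` satisfy
`ζ_{r/s}^{k'_1} ⋯ ζ_{r/s}^{k'_{m₂}} = φ(ω)`, i.e.
`s·(k'_1 + ⋯ + k'_{m₂}) ≡ ∑ i, a i (mod r)`. -/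
theorem factorization_graph_weight_sum (r s n : ℕ) (hr : 0 < r) (hs : 0 < s)
    (hsr : s ∣ r) (L : List (Sym2 (Fin n) × ℤ))
    (hlab : ∀ ek ∈ L,
      (ek.1.IsDiag → 0 < ek.2 ∧ ek.2 < ((r / s : ℕ) : ℤ)) ∧
      (¬ ek.1.IsDiag → 0 ≤ ek.2 ∧ ek.2 < (r : ℤ))) :
    (((∑ i, (walkEndWt s L i).2 : ℤ) : ZMod r)
        = ∑ i, (L.map (reflOf r s n)).reverse.prod.2 i) ∧
    ((((s : ℤ) * ((L.filter fun ek => ek.1.IsDiag).map Prod.snd).sum : ℤ) : ZMod r)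
        = ∑ i, (L.map (reflOf r s n)).reverse.prod.2 i) :=
  factorization_graph_weight_sum_general r s n L
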